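/- Let a > 0 and λ ∈ ℝ. If the density of BSN(λ, a, a) is symmetric about 0, i.e. g(−x; λ, a, a) = g(x; λ, a, a) for all real x, then λ = 0. -/

import Mathlib

/-!
Write `S_l` for the skew-normal cdf and `B(u; a, b) = ∫₀ᵘ s^(a-1) (1-s)^(b-1) ds` for the
incomplete beta integral; the BSN(l, a, b) density is the derivative of the cdf
`x ↦ B(S_l(x); a, b) / B(a, b)`. Reflecting the skew-normal law, `S_l(-x) = 1 - S_{-l}(x)`,
turns `g(-x; l, a, a)` into `g(x; -l, a, a)`. So a symmetric density makes BSN(l, a, a) and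
BSN(-l, a, a) have the same density, hence the same cdf (both vanish at `-∞`). At `x = 0`, since
`B(·; a, a)` is strictly increasing, this gives `S_l(0) = S_{-l}(0)`, whereas `l ↦ S_l(0)` is
strictly decreasing; so `l = -l`.
-/

open MeasureTheory

/-- Standard normal density. -/
noncomputable def normPdf (x : ℝ) : ℝ := Real.exp (-x ^ 2 / 2) / Real.sqrt (2 * Real.pi)

/-- Standard normal cdf. -/
noncomputable def normCdf (x : ℝ) : ℝ := ∫ t in Set.Iic x, normPdf t

/-- Skew-normal cdf with parameter `l`. -/
noncomputable def snCdf (l z : ℝ) : ℝ := ∫ t in Set.Iic z, 2 * normPdf t * normCdf (l * t)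

/-- The Beta function. -/
noncomputable def betaFn (a b : ℝ) : ℝ := Real.Gamma a * Real.Gamma b / Real.Gamma (a + b)

/-- The Beta skew-normal density with parameters `l`, `a`, `b`. -/
noncomputable def bsnPdf (l a b x : ℝ) : ℝ :=
  (2 / betaFn a b) * snCdf l x ^ (a - 1) * (1 - snCdf l x) ^ (b - 1) * normPdf x *
    normCdf (l * x)

open Set Filter Topology

section IntegralIic

variable {f : ℝ → ℝ}

lemma hasDerivAt_integral_Iic (hf : Integrable f) (hc : Continuous f) (x : ℝ) :
    HasDerivAt (fun y => ∫ t in Iic y, f t) (f x) x := by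
  have h : (fun y => ∫ t in Iic y, f t) =
      fun y => (∫ t in Iic 0, f t) + ∫ t in (0 : ℝ)..y, f t := by
    funext y
    rw [← intervalIntegral.integral_Iic_sub_Iic hf.integrableOn hf.integrableOn]
    ring
  rw [h]
  exact (hc.integral_hasStrictDerivAt 0 x).hasDerivAt.const_add _

lemma tendsto_integral_Iic_atBot (hf : Integrable f) :
    Tendsto (fun x => ∫ t in Iic x, f t) atBot (𝓝 0) := by
  have h := tendsto_setIntegral_of_antitone (μ := volume) (f := f) (ι := ℝᵒᵈ)
    (s := fun i => Iic (OrderDual.ofDual i)) (fun _ => measurableSet_Iic)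
    (fun _ _ hij => Iic_subset_Iic.2 hij) ⟨OrderDual.toDual 0, hf.integrableOn⟩
  have hempty : ⋂ i : ℝᵒᵈ, Iic (OrderDual.ofDual i) = ∅ := iInter_Iic_eq_empty_iff.2 <|
    not_bddBelow_iff.2 fun x => ⟨x - 1, ⟨OrderDual.toDual (x - 1), rfl⟩, by linarith⟩
  rwa [hempty, Measure.restrict_empty, integral_zero_measure] at h

lemma integral_Iic_pos {x : ℝ} (hf : IntegrableOn f (Iic x)) (hpos : ∀ t < x, 0 < f t) :
    0 < ∫ t in Iic x, f t := by
  rw [integral_Iic_eq_integral_Iio, setIntegral_pos_iff_support_of_nonneg_ae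
    ((ae_restrict_iff' measurableSet_Iio).2 (Eventually.of_forall fun t ht => (hpos t ht).le))
    (hf.mono_set Iio_subset_Iic_self)]
  have hsupp : Iio x ⊆ Function.support f := fun t ht => (hpos t ht).ne'
  rw [inter_eq_right.2 hsupp, Real.volume_Iio]
  exact ENNReal.zero_lt_top

end IntegralIic

lemma eq_of_hasDerivAt_of_tendsto_atBot {f g f' : ℝ → ℝ} {c : ℝ}
    (hf : ∀ x, HasDerivAt f (f' x) x) (hg : ∀ x, HasDerivAt g (f' x) x)
    (hfc : Tendsto f atBot (𝓝 c)) (hgc : Tendsto g atBot (𝓝 c)) : f = g := by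
  have hconst : ∀ x y, (f - g) x = (f - g) y := is_const_of_deriv_eq_zero
    (fun x => ((hf x).sub (hg x)).differentiableAt) fun x => by
      simpa using ((hf x).sub (hg x)).deriv
  have hlim : Tendsto (f - g) atBot (𝓝 0) := sub_self c ▸ hfc.sub hgc
  funext x
  exact sub_eq_zero.1 <| tendsto_nhds_unique (tendsto_const_nhds.congr (hconst x)) hlim

lemma normPdf_eq_gaussianPDFReal : normPdf = ProbabilityTheory.gaussianPDFReal 0 1 := by
  ext x
  simp [normPdf, ProbabilityTheory.gaussianPDFReal, div_eq_inv_mul]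

lemma normPdf_pos (x : ℝ) : 0 < normPdf x := by
  rw [normPdf_eq_gaussianPDFReal]
  exact ProbabilityTheory.gaussianPDFReal_pos _ _ _ one_ne_zero

lemma normPdf_neg (x : ℝ) : normPdf (-x) = normPdf x := by
  simp [normPdf]

@[fun_prop]
lemma continuous_normPdf : Continuous normPdf := by
  unfold normPdf
  fun_prop

lemma integrable_normPdf : Integrable normPdf := by
  rw [normPdf_eq_gaussianPDFReal]
  exact ProbabilityTheory.integrable_gaussianPDFReal _ _

lemma integral_normPdf : ∫ x, normPdf x = 1 := by
  rw [normPdf_eq_gaussianPDFReal]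
  exact ProbabilityTheory.integral_gaussianPDFReal_eq_one _ one_ne_zero

lemma normCdf_pos (x : ℝ) : 0 < normCdf x :=
  integral_Iic_pos integrable_normPdf.integrableOn fun t _ => normPdf_pos t

lemma normCdf_add_normCdf_neg (x : ℝ) : normCdf x + normCdf (-x) = 1 := by
  have h : normCdf (-x) = ∫ t in Ioi x, normPdf t := by
    rw [normCdf, ← integral_comp_neg_Ioi]
    simp_rw [normPdf_neg]
  rw [h, normCdf, intervalIntegral.integral_Iic_add_Ioi integrable_normPdf.integrableOn
    integrable_normPdf.integrableOn, integral_normPdf]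

lemma normCdf_le_one (x : ℝ) : normCdf x ≤ 1 := by
  linarith [normCdf_add_normCdf_neg x, normCdf_pos (-x)]

lemma normCdf_strictMono : StrictMono normCdf := by
  intro x y hxy
  rw [← sub_pos, normCdf, normCdf, intervalIntegral.integral_Iic_sub_Iic
    integrable_normPdf.integrableOn integrable_normPdf.integrableOn]
  exact intervalIntegral.intervalIntegral_pos_of_pos
    (continuous_normPdf.intervalIntegrable x y) normPdf_pos hxy

@[fun_prop]
lemma continuous_normCdf : Continuous normCdf :=
  continuous_iff_continuousAt.2 fun x =>
    (hasDerivAt_integral_Iic integrable_normPdf continuous_normPdf x).continuousAt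

noncomputable def snPdf (l t : ℝ) : ℝ := 2 * normPdf t * normCdf (l * t)

section SkewNormal

variable (l : ℝ)

lemma snCdf_eq_integral_snPdf (x : ℝ) : snCdf l x = ∫ t in Iic x, snPdf l t := rfl

lemma snPdf_pos (t : ℝ) : 0 < snPdf l t := by
  have := normPdf_pos t
  have := normCdf_pos (l * t)
  unfold snPdf
  positivity

lemma snPdf_neg (t : ℝ) : snPdf (-l) (-t) = snPdf l t := by
  simp [snPdf, normPdf_neg]

lemma snPdf_add_snPdf_neg (t : ℝ) : snPdf l t + snPdf (-l) t = 2 * normPdf t := by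
  have h := normCdf_add_normCdf_neg (l * t)
  rw [snPdf, snPdf, neg_mul, ← mul_add, h, mul_one]

lemma continuous_snPdf : Continuous (snPdf l) := by
  unfold snPdf
  fun_prop

lemma integrable_snPdf : Integrable (snPdf l) := by
  refine (integrable_normPdf.const_mul 2).mono (continuous_snPdf l).aestronglyMeasurable
    (Eventually.of_forall fun t => ?_)
  have := normPdf_pos t
  rw [Real.norm_of_nonneg (snPdf_pos l t).le, Real.norm_of_nonneg (by positivity), snPdf]
  exact mul_le_of_le_one_right (by positivity) (normCdf_le_one _)

lemma integral_snPdf : ∫ t, snPdf l t = 1 := by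
  have hneg : ∫ t, snPdf (-l) t = ∫ t, snPdf l t := by
    rw [← integral_neg_eq_self]
    simp_rw [snPdf_neg]
  have hsum := integral_add (integrable_snPdf l) (integrable_snPdf (-l))
  simp_rw [snPdf_add_snPdf_neg, integral_const_mul, integral_normPdf, hneg] at hsum
  linarith

lemma snCdf_neg (x : ℝ) : snCdf l (-x) = 1 - snCdf (-l) x := by
  have h : snCdf l (-x) = ∫ t in Ioi x, snPdf (-l) t := by
    rw [snCdf_eq_integral_snPdf, ← integral_comp_neg_Ioi]
    simp_rw [← snPdf_neg l, neg_neg]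
  rw [h, snCdf_eq_integral_snPdf, ← integral_snPdf (-l),
    ← intervalIntegral.integral_Iic_add_Ioi (integrable_snPdf (-l)).integrableOn
      (integrable_snPdf (-l)).integrableOn]
  ring

lemma snCdf_pos (x : ℝ) : 0 < snCdf l x :=
  integral_Iic_pos (integrable_snPdf l).integrableOn fun t _ => snPdf_pos l t

lemma snCdf_lt_one (x : ℝ) : snCdf l x < 1 := by
  have h := snCdf_neg l (-x)
  rw [neg_neg] at h
  linarith [snCdf_pos (-l) (-x)]

lemma hasDerivAt_snCdf (x : ℝ) : HasDerivAt (snCdf l) (snPdf l x) x :=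
  hasDerivAt_integral_Iic (integrable_snPdf l) (continuous_snPdf l) x

lemma tendsto_snCdf_atBot : Tendsto (snCdf l) atBot (𝓝 0) :=
  tendsto_integral_Iic_atBot (integrable_snPdf l)

end SkewNormal

lemma snCdf_strictAnti_left {x : ℝ} (hx : x ≤ 0) : StrictAnti fun l => snCdf l x := by
  intro l l' hll'
  dsimp only
  rw [← sub_pos, snCdf_eq_integral_snPdf, snCdf_eq_integral_snPdf,
    ← integral_sub (integrable_snPdf l).integrableOn (integrable_snPdf l').integrableOn]
  refine integral_Iic_pos ((integrable_snPdf l).sub (integrable_snPdf l')).integrableOn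
    fun t ht => ?_
  have hmono : normCdf (l' * t) < normCdf (l * t) :=
    normCdf_strictMono (mul_lt_mul_of_neg_right hll' (ht.trans_le hx))
  have := normPdf_pos t
  rw [sub_pos, snPdf, snPdf]
  gcongr

lemma snCdf_mem_Ioo (l x : ℝ) : snCdf l x ∈ Ioo 0 1 := ⟨snCdf_pos l x, snCdf_lt_one l x⟩

noncomputable def incBeta (a b u : ℝ) : ℝ := ∫ s in (0 : ℝ)..u, s ^ (a - 1) * (1 - s) ^ (b - 1)

lemma intervalIntegrable_betaIntegrand {a b : ℝ} (ha : 0 < a) (hb : 0 < b) :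
    IntervalIntegrable (fun s : ℝ => s ^ (a - 1) * (1 - s) ^ (b - 1)) volume 0 1 := by
  have hC := Complex.betaIntegral_convergent (u := a) (v := b) (by simpa) (by simpa)
  rw [intervalIntegrable_iff_integrableOn_Ioc_of_le zero_le_one] at hC ⊢
  refine IntegrableOn.congr_fun (f := fun s : ℝ => RCLike.re _) hC.re (fun s hs => ?_)
    measurableSet_Ioc
  have h1 : (0 : ℝ) ≤ 1 - s := by linarith [hs.2]
  have key : ((s ^ (a - 1) * (1 - s) ^ (b - 1) : ℝ) : ℂ) =
      (s : ℂ) ^ ((a : ℂ) - 1) * (1 - (s : ℂ)) ^ ((b : ℂ) - 1) := by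
    rw [Complex.ofReal_mul, Complex.ofReal_cpow hs.1.le, Complex.ofReal_cpow h1]
    push_cast
    rfl
  simp only [← key, RCLike.re_to_complex, Complex.ofReal_re]

section IncBeta

variable {a b : ℝ}

lemma intervalIntegrable_betaIntegrand_of_mem (ha : 0 < a) (hb : 0 < b) {u v : ℝ}
    (hu : u ∈ Icc (0 : ℝ) 1) (hv : v ∈ Icc (0 : ℝ) 1) :
    IntervalIntegrable (fun s : ℝ => s ^ (a - 1) * (1 - s) ^ (b - 1)) volume u v :=
  (intervalIntegrable_betaIntegrand ha hb).mono_set (by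
    rw [uIcc_of_le zero_le_one]
    exact uIcc_subset_Icc hu hv)

lemma continuousAt_betaIntegrand {u : ℝ} (hu : u ∈ Ioo (0 : ℝ) 1) :
    ContinuousAt (fun s : ℝ => s ^ (a - 1) * (1 - s) ^ (b - 1)) u :=
  ((Real.continuousAt_rpow_const _ _ (Or.inl hu.1.ne')).mul
    ((Real.continuousAt_rpow_const _ _ (Or.inl (sub_pos.2 hu.2).ne')).comp
      (continuous_const.sub continuous_id).continuousAt))

lemma hasDerivAt_incBeta (ha : 0 < a) (hb : 0 < b) {u : ℝ} (hu : u ∈ Ioo (0 : ℝ) 1) :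
    HasDerivAt (incBeta a b) (u ^ (a - 1) * (1 - u) ^ (b - 1)) u :=
  intervalIntegral.integral_hasDerivAt_right
    (intervalIntegrable_betaIntegrand_of_mem ha hb (left_mem_Icc.2 zero_le_one)
      (Ioo_subset_Icc_self hu))
    (ContinuousAt.stronglyMeasurableAtFilter isOpen_Ioo
      (fun _ hv => continuousAt_betaIntegrand hv) u hu)
    (continuousAt_betaIntegrand hu)

lemma continuousOn_incBeta (ha : 0 < a) (hb : 0 < b) : ContinuousOn (incBeta a b) (Icc 0 1) := by
  have h := intervalIntegral.continuousOn_primitive_interval'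
    (intervalIntegrable_betaIntegrand ha hb) left_mem_uIcc
  rwa [uIcc_of_le zero_le_one] at h

lemma strictMonoOn_incBeta (ha : 0 < a) (hb : 0 < b) : StrictMonoOn (incBeta a b) (Icc 0 1) := by
  intro u hu v hv huv
  rw [← sub_pos, incBeta, incBeta, intervalIntegral.integral_interval_sub_left
    (intervalIntegrable_betaIntegrand_of_mem ha hb (left_mem_Icc.2 zero_le_one) hv)
    (intervalIntegrable_betaIntegrand_of_mem ha hb (left_mem_Icc.2 zero_le_one) hu)]
  refine intervalIntegral.intervalIntegral_pos_of_pos_on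
    (intervalIntegrable_betaIntegrand_of_mem ha hb hu hv) (fun s hs => ?_) huv
  have hs0 : 0 < s := hu.1.trans_lt hs.1
  have hs1 : 0 < 1 - s := by linarith [hs.2, hv.2]
  positivity

end IncBeta

lemma betaFn_comm (a b : ℝ) : betaFn a b = betaFn b a := by
  rw [betaFn, betaFn, mul_comm, add_comm]

lemma betaFn_pos {a b : ℝ} (ha : 0 < a) (hb : 0 < b) : 0 < betaFn a b := by
  have := Real.Gamma_pos_of_pos ha
  have := Real.Gamma_pos_of_pos hb
  have := Real.Gamma_pos_of_pos (add_pos ha hb)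
  unfold betaFn
  positivity

lemma bsnPdf_neg (l a b x : ℝ) : bsnPdf l a b (-x) = bsnPdf (-l) b a x := by
  rw [bsnPdf, bsnPdf, snCdf_neg, sub_sub_cancel, normPdf_neg, betaFn_comm,
    show l * -x = -l * x by ring]
  ring

lemma bsnPdf_eq (l a b x : ℝ) :
    bsnPdf l a b x =
      snCdf l x ^ (a - 1) * (1 - snCdf l x) ^ (b - 1) * snPdf l x / betaFn a b := by
  rw [bsnPdf, snPdf]
  ring

noncomputable def bsnCdf (l a b x : ℝ) : ℝ := incBeta a b (snCdf l x) / betaFn a b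

lemma hasDerivAt_bsnCdf {a b : ℝ} (ha : 0 < a) (hb : 0 < b) (l x : ℝ) :
    HasDerivAt (bsnCdf l a b) (bsnPdf l a b x) x := by
  rw [bsnPdf_eq]
  exact ((hasDerivAt_incBeta ha hb (snCdf_mem_Ioo l x)).comp x
    (hasDerivAt_snCdf l x)).div_const _

lemma tendsto_bsnCdf_atBot {a b : ℝ} (ha : 0 < a) (hb : 0 < b) (l : ℝ) :
    Tendsto (bsnCdf l a b) atBot (𝓝 0) := by
  have h : Tendsto (fun x => incBeta a b (snCdf l x)) atBot (𝓝 (incBeta a b 0)) :=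
    ((continuousOn_incBeta ha hb) 0 (left_mem_Icc.2 zero_le_one)).tendsto.comp
      (tendsto_nhdsWithin_iff.2 ⟨tendsto_snCdf_atBot l,
        Eventually.of_forall fun x => Ioo_subset_Icc_self (snCdf_mem_Ioo l x)⟩)
  have h0 : incBeta a b 0 = 0 := intervalIntegral.integral_same
  have hdiv := h.div_const (betaFn a b)
  rwa [h0, zero_div] at hdiv

/-- If the `BSN(l, a, a)` density is symmetric about `0`, then `l = 0`. -/
theorem bsn_symmetric_implies_lambda_zero (l a : ℝ) (ha : 0 < a)
    (hsym : ∀ x : ℝ, bsnPdf l a a (-x) = bsnPdf l a a x) : l = 0 := by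
  have hpdf : ∀ x, bsnPdf (-l) a a x = bsnPdf l a a x := fun x => by rw [← bsnPdf_neg, hsym]
  have hcdf : bsnCdf (-l) a a = bsnCdf l a a :=
    eq_of_hasDerivAt_of_tendsto_atBot (fun x => hpdf x ▸ hasDerivAt_bsnCdf ha ha (-l) x)
      (hasDerivAt_bsnCdf ha ha l) (tendsto_bsnCdf_atBot ha ha (-l))
      (tendsto_bsnCdf_atBot ha ha l)
  have hinc : incBeta a a (snCdf (-l) 0) = incBeta a a (snCdf l 0) := by
    have h0 := congrFun hcdf 0
    rwa [bsnCdf, bsnCdf, div_left_inj' (betaFn_pos ha ha).ne'] at h0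
  have hsn : snCdf (-l) 0 = snCdf l 0 :=
    (strictMonoOn_incBeta ha ha).injOn (Ioo_subset_Icc_self (snCdf_mem_Ioo (-l) 0))
      (Ioo_subset_Icc_self (snCdf_mem_Ioo l 0)) hinc
  linarith [(snCdf_strictAnti_left le_rfl).injective hsn]
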